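/- arXiv:1401.2186 — 5 statements merged into one kernel-verified Lean document; each statement's English description precedes it below -/
import Mathlib

section
/- Let (μ, (f_i)_{i∈Z_N}) be a monic system on K_N = (Z_N)^ℕ, i.e., μ is a finite Borel measure with μ∘σ_i^{-1} ≪ μ and d(μ∘σ_i^{-1})/dμ = |f_i|² for functions f_i ∈ L²(μ) with f_i(x) ≠ 0 for μ-a.e. x in σ_i(K_N). Then μ∘σ^{-1} ≪ μ and the Radon–Nikodym derivative d(μ∘σ^{-1})/dμ equals the sum over j ∈ Z_N of χ_{σ_j(K_N)}/|f_j∘σ_j|². -/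
open MeasureTheory ENNReal

noncomputable section

abbrev Word (N : ℕ) := ℕ → Fin N

/-- The left shift `σ` deleting the first letter. -/
def shift {N : ℕ} (ω : Word N) : Word N := fun n => ω (n + 1)

/-- The map `σ_i` prepending the letter `i`. -/
def prepend {N : ℕ} (i : Fin N) (ω : Word N) : Word N :=
  fun n => match n with
  | 0 => i
  | n + 1 => ω n

/-- The cylinder set determined by a finite word. -/
def cyl {N : ℕ} (w : List (Fin N)) : Set (Word N) :=
  {ω | ∀ k : Fin w.length, ω k = w.get k}

/-!
The shift has the prepending maps `σ_j` as right inverses, one on each cylinder `σ_j(K_N)`.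
On that cylinder, `μ` is recovered from `ν_j = μ ∘ σ_j⁻¹` by dividing by `dν_j/dμ`, which is
where the nonvanishing of `f_j` enters; transporting back along `σ_j` gives
`μ(σ_j(K_N) ∩ σ⁻¹ s) = ∫_s (dν_j/dμ ∘ σ_j)⁻¹ dμ`, and summing over `j` identifies
`μ ∘ σ⁻¹` as `μ` with density `∑_j (|f_j ∘ σ_j|²)⁻¹`.
-/

namespace MeasureTheory

variable {X : Type*} [MeasurableSpace X]

lemma measure_eq_setLIntegral_inv_rnDeriv {μ ν : Measure X} [SigmaFinite μ] [SigmaFinite ν]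
    (hνμ : ν ≪ μ) {B : Set X} (hB : MeasurableSet B)
    (hpos : ∀ᵐ x ∂μ, x ∈ B → ν.rnDeriv μ x ≠ 0) :
    μ B = ∫⁻ x in B, (ν.rnDeriv μ x)⁻¹ ∂ν := by
  have hinv : AEMeasurable (fun x => (ν.rnDeriv μ x)⁻¹) μ :=
    (Measure.measurable_rnDeriv ν μ).inv.aemeasurable
  rw [← setLIntegral_rnDeriv_mul hνμ hinv hB, ← setLIntegral_one]
  refine (setLIntegral_congr_fun_ae hB ?_).symm
  filter_upwards [hpos, Measure.rnDeriv_lt_top ν μ] with x hx_pos hx_top hxB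
  exact ENNReal.mul_inv_cancel (hx_pos hxB) hx_top.ne

lemma measure_inter_preimage_eq_setLIntegral_inv_rnDeriv_comp {μ : Measure X}
    [IsFiniteMeasure μ] {φ T : X → X} (hφ : Measurable φ) (hT : Measurable T)
    (hTφ : ∀ x, T (φ x) = x) {A : Set X} (hA : MeasurableSet A) (hφA : ∀ x, φ x ∈ A)
    (hac : μ.map φ ≪ μ) (hpos : ∀ᵐ x ∂μ, x ∈ A → (μ.map φ).rnDeriv μ x ≠ 0)
    {s : Set X} (hs : MeasurableSet s) :
    μ (A ∩ T ⁻¹' s) = ∫⁻ x in s, ((μ.map φ).rnDeriv μ (φ x))⁻¹ ∂μ := by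
  have hB : MeasurableSet (A ∩ T ⁻¹' s) := hA.inter (hT hs)
  have hφB : φ ⁻¹' (A ∩ T ⁻¹' s) = s := by
    ext x
    simp [hφA, hTφ]
  have hposB : ∀ᵐ x ∂μ, x ∈ A ∩ T ⁻¹' s → (μ.map φ).rnDeriv μ x ≠ 0 := by
    filter_upwards [hpos] with x hx hxB using hx hxB.1
  have hinv : Measurable fun x => ((μ.map φ).rnDeriv μ x)⁻¹ :=
    (Measure.measurable_rnDeriv _ _).inv
  rw [measure_eq_setLIntegral_inv_rnDeriv hac hB hposB, setLIntegral_map hB hinv hφ, hφB]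

theorem map_eq_withDensity_sum_inv_rnDeriv_comp {ι : Type*} [Fintype ι] [MeasurableSpace ι]
    [MeasurableSingletonClass ι] {μ : Measure X} [IsFiniteMeasure μ] {π : X → ι}
    (hπ : Measurable π) {φ : ι → X → X} (hφ : ∀ i, Measurable (φ i)) {T : X → X}
    (hT : Measurable T) (hTφ : ∀ i x, T (φ i x) = x) (hπφ : ∀ i x, π (φ i x) = i)
    (hac : ∀ i, μ.map (φ i) ≪ μ)
    (hpos : ∀ i, ∀ᵐ x ∂μ, π x = i → (μ.map (φ i)).rnDeriv μ x ≠ 0) :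
    μ.map T = μ.withDensity fun x => ∑ i, ((μ.map (φ i)).rnDeriv μ (φ i x))⁻¹ := by
  ext s hs
  have hfibre : ∀ i, MeasurableSet (π ⁻¹' {i}) := fun i => hπ (measurableSet_singleton i)
  have hsplit : μ (T ⁻¹' s) = ∑ i, μ (π ⁻¹' {i} ∩ T ⁻¹' s) := by
    simp_rw [← Measure.restrict_apply (hfibre _)]
    rw [sum_measure_preimage_singleton _ fun i _ => hfibre i, Finset.coe_univ,
      Set.preimage_univ, Measure.restrict_apply_univ]
  have hinv : ∀ i, Measurable fun x => ((μ.map (φ i)).rnDeriv μ (φ i x))⁻¹ := fun i =>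
    ((Measure.measurable_rnDeriv _ _).comp (hφ i)).inv
  rw [Measure.map_apply hT hs, withDensity_apply _ hs, hsplit,
    lintegral_finsetSum _ fun i _ => hinv i]
  refine Finset.sum_congr rfl fun i _ => ?_
  exact measure_inter_preimage_eq_setLIntegral_inv_rnDeriv_comp (hφ i) hT (hTφ i) (hfibre i)
    (hπφ i) (hac i) (by simpa using hpos i) hs

end MeasureTheory

lemma measurable_shift {N : ℕ} : Measurable (shift (N := N)) :=
  measurable_pi_lambda _ fun _ => measurable_pi_apply _

lemma measurable_prepend {N : ℕ} (i : Fin N) : Measurable (prepend i) :=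
  measurable_pi_lambda _ fun n => by
    cases n with
    | zero => exact measurable_const
    | succ n => exact measurable_pi_apply _

lemma shift_prepend {N : ℕ} (i : Fin N) (x : Word N) : shift (prepend i x) = x := rfl

lemma prepend_mem_cyl_singleton {N : ℕ} (i : Fin N) (x : Word N) : prepend i x ∈ cyl [i] :=
  fun k => by fin_cases k; rfl

theorem monicSystem_shift_ac_rnDeriv_general {N : ℕ}
    (μ : Measure (Word N)) [IsFiniteMeasure μ] (f : Fin N → Word N → ℂ)
    (hac : ∀ i, μ.map (prepend i) ≪ μ)
    (hrn : ∀ i, (μ.map (prepend i)).rnDeriv μ =ᵐ[μ]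
      fun x => ENNReal.ofReal (‖f i x‖ ^ 2))
    (hne : ∀ i, ∀ᵐ x ∂μ, x 0 = i → f i x ≠ 0) :
    μ.map shift ≪ μ ∧
      (μ.map shift).rnDeriv μ =ᵐ[μ]
        fun x => ∑ j, Set.indicator (cyl [j]) (fun _ => (1 : ℝ≥0∞)) (prepend j x) /
          ENNReal.ofReal (‖f j (prepend j x)‖ ^ 2) := by
  have hpos : ∀ i, ∀ᵐ x ∂μ, x 0 = i → (μ.map (prepend i)).rnDeriv μ x ≠ 0 := fun i => by
    filter_upwards [hrn i, hne i] with x hx hfx h0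
    simpa [hx] using hfx h0
  have hmap := map_eq_withDensity_sum_inv_rnDeriv_comp (measurable_pi_apply 0)
    measurable_prepend measurable_shift shift_prepend (fun _ _ => rfl) hac hpos
  have hrn_prepend : ∀ᵐ x ∂μ, ∀ j, (μ.map (prepend j)).rnDeriv μ (prepend j x) =
      ENNReal.ofReal (‖f j (prepend j x)‖ ^ 2) :=
    ae_all_iff.2 fun j => ae_of_ae_map (measurable_prepend j).aemeasurable ((hac j).ae_le (hrn j))
  have hdens : Measurable fun x => ∑ j, ((μ.map (prepend j)).rnDeriv μ (prepend j x))⁻¹ :=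
    Finset.measurable_sum _ fun j _ =>
      ((Measure.measurable_rnDeriv _ _).comp (measurable_prepend j)).inv
  refine ⟨hmap ▸ withDensity_absolutelyContinuous μ _, ?_⟩
  filter_upwards [hmap ▸ Measure.rnDeriv_withDensity μ hdens, hrn_prepend] with x hx hx_prepend
  simp [hx, hx_prepend, Set.indicator_of_mem (prepend_mem_cyl_singleton _ x)]

theorem monicSystem_shift_ac_rnDeriv {N : ℕ} (hN : 2 ≤ N)
    (μ : Measure (Word N)) [IsFiniteMeasure μ] (f : Fin N → Word N → ℂ)
    (hf2 : ∀ i, MemLp (f i) 2 μ)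
    (hac : ∀ i, μ.map (prepend i) ≪ μ)
    (hrn : ∀ i, (μ.map (prepend i)).rnDeriv μ =ᵐ[μ]
      fun x => ENNReal.ofReal (‖f i x‖ ^ 2))
    (hne : ∀ i, ∀ᵐ x ∂μ, x 0 = i → f i x ≠ 0) :
    μ.map shift ≪ μ ∧
      (μ.map shift).rnDeriv μ =ᵐ[μ]
        fun x => ∑ j, Set.indicator (cyl [j]) (fun _ => (1 : ℝ≥0∞)) (prepend j x) /
          ENNReal.ofReal (‖f j (prepend j x)‖ ^ 2) :=
  monicSystem_shift_ac_rnDeriv_general μ f hac hrn hne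
end
end

section
/- Let (μ, (f_i)_{i∈Z_N}) be a monic system on K_N. Then the operators S_i on L²(μ) defined by (S_i f)(x) = f_i(x)·f(σ(x)) are isometries with mutually orthogonal ranges satisfying the Cuntz relations: S_i* S_j = δ_{ij} I and Σ_{i∈Z_N} S_i S_i* = I. -/
/-!
Each `S_i` is a weighted composition operator `g ↦ F · (g ∘ σ)`. Because `σ` pushes `|F|² μ`
forward to `μ`, it is an isometry; because moreover `σ ∘ σ_i = id` and `σ_i` pushes `μ` forward
to `|F_i|² μ`, its adjoint is `g ↦ (F_i⁻¹ g) ∘ σ_i`. The density also forces `F_i = 0` a.e. off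
the cylinder `{x | x 0 = i}`, while `F_i ≠ 0` on it, so `S_i S_i*` is multiplication by the
indicator of that cylinder; these cylinders partition `K_N`, and the disjointness of the
supports of the `F_i` makes the ranges of the `S_i` orthogonal.
-/

open MeasureTheory ENNReal

noncomputable section

namespace MeasureTheory

theorem Lp.coeFn_finset_sum {α E ι : Type*} [MeasurableSpace α] {μ : Measure α}
    [NormedAddCommGroup E] {p : ℝ≥0∞} (s : Finset ι) (v : ι → Lp E p μ) :
    ⇑(∑ i ∈ s, v i) =ᵐ[μ] ∑ i ∈ s, ⇑(v i) := by
  classical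
  induction s using Finset.induction with
  | empty => simpa using Lp.coeFn_zero E p μ
  | insert a s has ih =>
    simp only [Finset.sum_insert has]
    exact (Lp.coeFn_add _ _).trans ih.add_left

theorem eLpNorm_two_eq_lintegral {α E : Type*} [MeasurableSpace α] {μ : Measure α}
    [NormedAddCommGroup E] (f : α → E) :
    eLpNorm f 2 μ = (∫⁻ x, ‖f x‖ₑ ^ 2 ∂μ) ^ (1 / 2 : ℝ) := by
  simpa using eLpNorm_nnreal_eq_lintegral (f := f) (μ := μ) (p := 2) two_ne_zero

end MeasureTheory

section WeightedComposition

open MeasureTheory ComplexConjugate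
open scoped InnerProductSpace

variable {X : Type*} [MeasurableSpace X] {μ : Measure X} {σ τ : X → X} {F : X → ℂ}

theorem lintegral_enorm_sq_mul_comp (hσ : Measurable σ) (hF : Measurable F)
    (hw : (μ.withDensity fun x => ‖F x‖ₑ ^ 2).map σ = μ) {Φ : X → ℝ≥0∞} (hΦ : Measurable Φ) :
    ∫⁻ x, ‖F x‖ₑ ^ 2 * Φ (σ x) ∂μ = ∫⁻ x, Φ x ∂μ := by
  calc ∫⁻ x, ‖F x‖ₑ ^ 2 * Φ (σ x) ∂μ
      = ∫⁻ x, Φ (σ x) ∂(μ.withDensity fun x => ‖F x‖ₑ ^ 2) :=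
        (lintegral_withDensity_eq_lintegral_mul _ (by fun_prop) (hΦ.comp hσ)).symm
    _ = ∫⁻ x, Φ x ∂μ := by rw [← lintegral_map hΦ hσ, hw]

theorem ae_mul_comp_congr (hσ : Measurable σ) (hF : Measurable F)
    (hw : (μ.withDensity fun x => ‖F x‖ₑ ^ 2).map σ = μ) {g₁ g₂ : X → ℂ} (h : g₁ =ᵐ[μ] g₂) :
    (fun x => F x * g₁ (σ x)) =ᵐ[μ] fun x => F x * g₂ (σ x) := by
  rw [← hw] at h
  have h' := ae_of_ae_map hσ.aemeasurable h
  rw [ae_withDensity_iff (by fun_prop)] at h'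
  filter_upwards [h'] with x hx
  by_cases hF0 : F x = 0
  · simp [hF0]
  · rw [hx (by simpa using hF0)]

theorem eLpNorm_mul_comp (hσ : Measurable σ) (hF : Measurable F)
    (hw : (μ.withDensity fun x => ‖F x‖ₑ ^ 2).map σ = μ) {g : X → ℂ} (hg : Measurable g) :
    eLpNorm (fun x => F x * g (σ x)) 2 μ = eLpNorm g 2 μ := by
  simp only [eLpNorm_two_eq_lintegral, enorm_mul, mul_pow]
  rw [lintegral_enorm_sq_mul_comp hσ hF hw (Φ := fun y => ‖g y‖ₑ ^ 2) (by fun_prop)]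

theorem memLp_mul_comp (hσ : Measurable σ) (hF : Measurable F)
    (hw : (μ.withDensity fun x => ‖F x‖ₑ ^ 2).map σ = μ) {g : X → ℂ} (hg : Measurable g)
    (hg2 : MemLp g 2 μ) : MemLp (fun x => F x * g (σ x)) 2 μ :=
  ⟨(hF.mul (hg.comp hσ)).aestronglyMeasurable, by rw [eLpNorm_mul_comp hσ hF hw hg]; exact hg2.2⟩

def weightedComp (hσ : Measurable σ) (hF : Measurable F)
    (hw : (μ.withDensity fun x => ‖F x‖ₑ ^ 2).map σ = μ) : Lp ℂ 2 μ →ₗᵢ[ℂ] Lp ℂ 2 μ where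
  toFun g := (memLp_mul_comp hσ hF hw (Lp.stronglyMeasurable g).measurable (Lp.memLp g)).toLp _
  map_add' g h := by
    rw [← MemLp.toLp_add, MemLp.toLp_eq_toLp_iff]
    filter_upwards [ae_mul_comp_congr hσ hF hw (Lp.coeFn_add g h)] with x hx
    rw [hx, Pi.add_apply, Pi.add_apply, mul_add]
  map_smul' c g := by
    rw [RingHom.id_apply, ← MemLp.toLp_const_smul, MemLp.toLp_eq_toLp_iff]
    filter_upwards [ae_mul_comp_congr hσ hF hw (Lp.coeFn_smul c g)] with x hx
    simp [hx, mul_left_comm]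
  norm_map' g := by
    simp only [LinearMap.coe_mk, AddHom.coe_mk]
    rw [Lp.norm_toLp, eLpNorm_mul_comp hσ hF hw (Lp.stronglyMeasurable g).measurable, Lp.norm_def]

theorem weightedComp_ae_eq (hσ : Measurable σ) (hF : Measurable F)
    (hw : (μ.withDensity fun x => ‖F x‖ₑ ^ 2).map σ = μ) (g : Lp ℂ 2 μ) :
    ⇑(weightedComp hσ hF hw g) =ᵐ[μ] fun x => F x * g (σ x) :=
  MemLp.coeFn_toLp (memLp_mul_comp hσ hF hw (Lp.stronglyMeasurable g).measurable (Lp.memLp g))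

theorem adjoint_weightedComp_comp_eq_zero {F₁ F₂ : X → ℂ} {σ₁ σ₂ : X → X}
    (hσ₁ : Measurable σ₁) (hσ₂ : Measurable σ₂) (hF₁ : Measurable F₁) (hF₂ : Measurable F₂)
    (hw₁ : (μ.withDensity fun x => ‖F₁ x‖ₑ ^ 2).map σ₁ = μ)
    (hw₂ : (μ.withDensity fun x => ‖F₂ x‖ₑ ^ 2).map σ₂ = μ)
    (h : ∀ᵐ x ∂μ, F₁ x = 0 ∨ F₂ x = 0) :
    (weightedComp hσ₁ hF₁ hw₁).toContinuousLinearMap.adjoint.comp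
      (weightedComp hσ₂ hF₂ hw₂).toContinuousLinearMap = 0 := by
  ext1 g
  refine ext_inner_left ℂ fun g' => ?_
  rw [ContinuousLinearMap.comp_apply, ContinuousLinearMap.adjoint_inner_right, L2.inner_def,
    zero_apply, inner_zero_right]
  refine integral_eq_zero_of_ae ?_
  filter_upwards [weightedComp_ae_eq hσ₁ hF₁ hw₁ g', weightedComp_ae_eq hσ₂ hF₂ hw₂ g, h]
    with x h₁ h₂ h0
  rcases h0 with h0 | h0 <;> simp [h₁, h₂, h0]

theorem eq_withDensity_enorm_sq_of_rnDeriv [SigmaFinite μ] {ν : Measure X} [SFinite ν]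
    (hνμ : ν ≪ μ) {f : X → ℂ} (hrn : ν.rnDeriv μ =ᵐ[μ] fun x => ENNReal.ofReal (‖f x‖ ^ 2))
    (hfF : f =ᵐ[μ] F) : ν = μ.withDensity fun x => ‖F x‖ₑ ^ 2 := by
  refine (Measure.withDensity_rnDeriv_eq ν μ hνμ).symm.trans (withDensity_congr_ae ?_)
  filter_upwards [hrn, hfF] with x h₁ h₂
  rw [h₁, h₂, ofReal_pow (norm_nonneg _), ofReal_norm]

theorem withDensity_map_eq_of_map_eq (hσ : Measurable σ) (hτ : Measurable τ)
    (hστ : ∀ x, σ (τ x) = x) {w : X → ℝ≥0∞} (hτμ : μ.map τ = μ.withDensity w) :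
    (μ.withDensity w).map σ = μ := by
  rw [← hτμ, Measure.map_map hσ hτ]
  simp [Function.comp_def, hστ]

theorem ae_mem_of_ne_zero (hτ : Measurable τ) (hF : Measurable F)
    (hτμ : μ.map τ = μ.withDensity fun x => ‖F x‖ₑ ^ 2) {A : Set X} (hA : MeasurableSet A)
    (hτA : ∀ x, τ x ∈ A) : ∀ᵐ x ∂μ, F x ≠ 0 → x ∈ A := by
  have h : ∀ᵐ x ∂(μ.map τ), x ∈ A := (ae_map_iff hτ.aemeasurable hA).2 (.of_forall hτA)
  rw [hτμ, ae_withDensity_iff (by fun_prop)] at h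
  filter_upwards [h] with x hx hx0 using hx (by simpa using hx0)

theorem integral_comp_eq_integral_norm_sq_smul (hτ : Measurable τ) (hF : Measurable F)
    (hτμ : μ.map τ = μ.withDensity fun x => ‖F x‖ₑ ^ 2) {Ψ : X → ℂ}
    (hΨ : Measurable Ψ) :
    ∫ x, Ψ (τ x) ∂μ = ∫ x, ‖F x‖ ^ 2 • Ψ x ∂μ := by
  rw [← integral_map hτ.aemeasurable hΨ.aestronglyMeasurable, hτμ,
    integral_withDensity_eq_integral_toReal_smul (by fun_prop) (.of_forall fun x => by simp)]
  simp [toReal_pow]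

theorem memLp_inv_mul_comp (hτ : Measurable τ) (hF : Measurable F)
    (hτμ : μ.map τ = μ.withDensity fun x => ‖F x‖ₑ ^ 2) {g : X → ℂ} (hg : Measurable g)
    (hg2 : MemLp g 2 μ) : MemLp (fun x => (F (τ x))⁻¹ * g (τ x)) 2 μ := by
  refine ⟨((hF.inv.mul hg).comp hτ).aestronglyMeasurable, ?_⟩
  refine lt_of_le_of_lt ?_ hg2.2
  simp only [eLpNorm_two_eq_lintegral]
  gcongr ?_ ^ _
  calc ∫⁻ x, ‖(F (τ x))⁻¹ * g (τ x)‖ₑ ^ 2 ∂μ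
      = ∫⁻ x, ‖(F x)⁻¹ * g x‖ₑ ^ 2 ∂(μ.map τ) :=
        (lintegral_map (f := fun x => ‖(F x)⁻¹ * g x‖ₑ ^ 2) (by fun_prop) hτ).symm
    _ = ∫⁻ x, ‖F x * ((F x)⁻¹ * g x)‖ₑ ^ 2 ∂μ := by
      rw [hτμ, lintegral_withDensity_eq_lintegral_mul _ (by fun_prop) (by fun_prop)]
      simp only [Pi.mul_apply, enorm_mul, mul_pow]
    _ ≤ ∫⁻ x, ‖g x‖ₑ ^ 2 ∂μ := by
      refine lintegral_mono fun x => ?_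
      rcases eq_or_ne (F x) 0 with h0 | h0
      · simp [h0]
      · rw [mul_inv_cancel_left₀ h0]

theorem adjoint_weightedComp_ae_eq (hσ : Measurable σ) (hτ : Measurable τ) (hF : Measurable F)
    (hw : (μ.withDensity fun x => ‖F x‖ₑ ^ 2).map σ = μ) (hστ : ∀ x, σ (τ x) = x)
    (hτμ : μ.map τ = μ.withDensity fun x => ‖F x‖ₑ ^ 2) (g : Lp ℂ 2 μ) :
    ⇑((weightedComp hσ hF hw).toContinuousLinearMap.adjoint g) =ᵐ[μ]
      fun x => (F (τ x))⁻¹ * g (τ x) := by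
  have hK := memLp_inv_mul_comp hτ hF hτμ (Lp.stronglyMeasurable g).measurable (Lp.memLp g)
  suffices (weightedComp hσ hF hw).toContinuousLinearMap.adjoint g = hK.toLp _ by
    rw [this]; exact hK.coeFn_toLp
  refine ext_inner_left ℂ fun h => ?_
  rw [ContinuousLinearMap.adjoint_inner_right, L2.inner_def, L2.inner_def]
  -- true also for `a = 0`, as `0⁻¹ = 0`
  have hconj : ∀ a b c : ℂ, conj (a * b) * c = ‖a‖ ^ 2 • (conj b * (a⁻¹ * c)) := by
    intro a b c
    rcases eq_or_ne a 0 with rfl | ha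
    · simp
    · rw [Complex.real_smul, Complex.ofReal_pow, ← Complex.conj_mul', map_mul]
      field_simp
  calc ∫ x, ⟪(weightedComp hσ hF hw h : Lp ℂ 2 μ) x, g x⟫_ℂ ∂μ
      = ∫ x, ‖F x‖ ^ 2 • (conj (h (σ x)) * ((F x)⁻¹ * g x)) ∂μ := by
        refine integral_congr_ae ?_
        filter_upwards [weightedComp_ae_eq hσ hF hw h] with x hx
        rw [RCLike.inner_apply', hx, hconj]
    _ = ∫ x, conj (h (σ (τ x))) * ((F (τ x))⁻¹ * g (τ x)) ∂μ := by
        refine (integral_comp_eq_integral_norm_sq_smul hτ hF hτμ ?_).symm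
        have := (Lp.stronglyMeasurable g).measurable
        have := (Lp.stronglyMeasurable h).measurable
        have := Complex.continuous_conj.measurable
        fun_prop
    _ = ∫ x, ⟪h x, hK.toLp _ x⟫_ℂ ∂μ := by
        refine integral_congr_ae ?_
        filter_upwards [hK.coeFn_toLp] with x hx
        rw [RCLike.inner_apply', hx, hστ]

theorem weightedComp_adjoint_ae_eq_indicator (hσ : Measurable σ) (hτ : Measurable τ)
    (hF : Measurable F) (hw : (μ.withDensity fun x => ‖F x‖ₑ ^ 2).map σ = μ)
    (hστ : ∀ x, σ (τ x) = x) (hτμ : μ.map τ = μ.withDensity fun x => ‖F x‖ₑ ^ 2)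
    {A : Set X} (hA : MeasurableSet A) (hτA : ∀ x, τ x ∈ A) (hAτσ : ∀ x ∈ A, τ (σ x) = x)
    (hFA : ∀ᵐ x ∂μ, x ∈ A → F x ≠ 0) (g : Lp ℂ 2 μ) :
    ⇑(weightedComp hσ hF hw ((weightedComp hσ hF hw).toContinuousLinearMap.adjoint g)) =ᵐ[μ]
      A.indicator g := by
  filter_upwards [weightedComp_ae_eq hσ hF hw _,
    ae_mul_comp_congr hσ hF hw (adjoint_weightedComp_ae_eq hσ hτ hF hw hστ hτμ g),
    ae_mem_of_ne_zero hτ hF hτμ hA hτA, hFA] with x h₁ h₂ hA₁ hA₂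
  rw [h₁, h₂]
  by_cases hx : x ∈ A
  · rw [Set.indicator_of_mem hx, hAτσ x hx, mul_inv_cancel_left₀ (hA₂ hx)]
  · rw [Set.indicator_of_notMem hx, not_not.1 (mt hA₁ hx), zero_mul]

end WeightedComposition

namespace Word

variable {N : ℕ}

theorem measurable_shift : Measurable (shift (N := N)) :=
  measurable_pi_lambda _ fun n => measurable_pi_apply (n + 1)

theorem measurable_prepend (i : Fin N) : Measurable (prepend i) :=
  measurable_pi_lambda _ fun n => by
    cases n with
    | zero => exact measurable_const
    | succ m => exact measurable_pi_apply m

theorem shift_prepend (i : Fin N) (x : Word N) : shift (prepend i x) = x := rfl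

theorem prepend_shift {i : Fin N} {x : Word N} (h : x 0 = i) : prepend i (shift x) = x := by
  funext n
  cases n with
  | zero => exact h.symm
  | succ m => rfl

theorem measurableSet_head_eq (i : Fin N) : MeasurableSet {x : Word N | x 0 = i} :=
  (measurable_pi_apply 0 : Measurable fun x : Word N => x 0) (measurableSet_singleton i)

theorem ae_head_eq_of_ne_zero {μ : Measure (Word N)} {F : Word N → ℂ} (i : Fin N)
    (hF : Measurable F) (hmap : μ.map (prepend i) = μ.withDensity fun x => ‖F x‖ₑ ^ 2) :
    ∀ᵐ x ∂μ, F x ≠ 0 → x 0 = i :=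
  ae_mem_of_ne_zero (measurable_prepend i) hF hmap (measurableSet_head_eq i) fun _ => rfl

variable {μ : Measure (Word N)} {F : Fin N → Word N → ℂ} (hF : ∀ i, Measurable (F i))
  (hmap : ∀ i, μ.map (prepend i) = μ.withDensity fun x => ‖F i x‖ₑ ^ 2)

def cuntzIsometry (i : Fin N) : Lp ℂ 2 μ →ₗᵢ[ℂ] Lp ℂ 2 μ :=
  weightedComp measurable_shift (hF i)
    (withDensity_map_eq_of_map_eq measurable_shift (measurable_prepend i) (shift_prepend i)
      (hmap i))

theorem cuntzIsometry_ae_eq (i : Fin N) (g : Lp ℂ 2 μ) :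
    ⇑(cuntzIsometry hF hmap i g) =ᵐ[μ] fun x => F i x * g (shift x) :=
  weightedComp_ae_eq _ _ _ g

theorem adjoint_cuntzIsometry_comp (i j : Fin N) :
    (cuntzIsometry hF hmap i).toContinuousLinearMap.adjoint.comp
      (cuntzIsometry hF hmap j).toContinuousLinearMap = if i = j then 1 else 0 := by
  split_ifs with hij
  · subst hij
    exact LinearIsometry.adjoint_comp_self _
  · refine adjoint_weightedComp_comp_eq_zero _ _ _ _ _ _ ?_
    filter_upwards [ae_head_eq_of_ne_zero i (hF i) (hmap i),
      ae_head_eq_of_ne_zero j (hF j) (hmap j)] with x hi hj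
    by_contra! h
    exact hij ((hi h.1).symm.trans (hj h.2))

theorem cuntzIsometry_adjoint_ae_eq_indicator (i : Fin N)
    (hFne : ∀ᵐ x ∂μ, x 0 = i → F i x ≠ 0) (g : Lp ℂ 2 μ) :
    ⇑(cuntzIsometry hF hmap i ((cuntzIsometry hF hmap i).toContinuousLinearMap.adjoint g)) =ᵐ[μ]
      {x | x 0 = i}.indicator g :=
  weightedComp_adjoint_ae_eq_indicator measurable_shift (measurable_prepend i) (hF i) _
    (shift_prepend i) (hmap i) (measurableSet_head_eq i) (fun _ => rfl)
    (fun _ => prepend_shift) hFne g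

theorem sum_cuntzIsometry_comp_adjoint (hFne : ∀ i, ∀ᵐ x ∂μ, x 0 = i → F i x ≠ 0) :
    ∑ i, (cuntzIsometry hF hmap i).toContinuousLinearMap.comp
      (cuntzIsometry hF hmap i).toContinuousLinearMap.adjoint = 1 := by
  ext1 g
  rw [sum_apply, one_apply_eq_self]
  refine Lp.ext ((Lp.coeFn_finset_sum _ _).trans ?_)
  filter_upwards [ae_all_iff.2 fun i =>
    cuntzIsometry_adjoint_ae_eq_indicator hF hmap i (hFne i) g] with x hx
  simp [hx, Set.indicator_apply]

end Word

open Word in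
theorem monicSystem_cuntz_relations_general {N : ℕ}
    (μ : Measure (Word N)) [IsFiniteMeasure μ] (f : Fin N → Word N → ℂ)
    (hf2 : ∀ i, MemLp (f i) 2 μ)
    (hac : ∀ i, μ.map (prepend i) ≪ μ)
    (hrn : ∀ i, (μ.map (prepend i)).rnDeriv μ =ᵐ[μ]
      fun x => ENNReal.ofReal (‖f i x‖ ^ 2))
    (hne : ∀ i, ∀ᵐ x ∂μ, x 0 = i → f i x ≠ 0) :
    ∃ S : Fin N → (Lp ℂ 2 μ →L[ℂ] Lp ℂ 2 μ),
      (∀ i (g : Lp ℂ 2 μ), ⇑(S i g) =ᵐ[μ] fun x => f i x * g (shift x)) ∧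
      (∀ i (g : Lp ℂ 2 μ), ‖S i g‖ = ‖g‖) ∧
      (∀ i j, (ContinuousLinearMap.adjoint (S i)).comp (S j)
          = if i = j then 1 else 0) ∧
      (∑ i, (S i).comp (ContinuousLinearMap.adjoint (S i)) = 1) := by
  let F i := (hf2 i).aemeasurable.mk (f i)
  have hF i : Measurable (F i) := (hf2 i).aemeasurable.measurable_mk
  have hfF i : f i =ᵐ[μ] F i := (hf2 i).aemeasurable.ae_eq_mk
  have hmap i : μ.map (prepend i) = μ.withDensity fun x => ‖F i x‖ₑ ^ 2 :=
    eq_withDensity_enorm_sq_of_rnDeriv (hac i) (hrn i) (hfF i)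
  have hFne i : ∀ᵐ x ∂μ, x 0 = i → F i x ≠ 0 := by
    filter_upwards [hne i, hfF i] with x h₁ h₂ using h₂ ▸ h₁
  refine ⟨fun i => (cuntzIsometry hF hmap i).toContinuousLinearMap, fun i g => ?_,
    fun i g => LinearIsometry.norm_map _ g, adjoint_cuntzIsometry_comp hF hmap,
    sum_cuntzIsometry_comp_adjoint hF hmap hFne⟩
  filter_upwards [cuntzIsometry_ae_eq hF hmap i g, hfF i] with x h₁ h₂
  rw [LinearIsometry.coe_toContinuousLinearMap, h₁, h₂]

theorem monicSystem_cuntz_relations {N : ℕ} (hN : 2 ≤ N)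
    (μ : Measure (Word N)) [IsFiniteMeasure μ] (f : Fin N → Word N → ℂ)
    (hf2 : ∀ i, MemLp (f i) 2 μ)
    (hac : ∀ i, μ.map (prepend i) ≪ μ)
    (hrn : ∀ i, (μ.map (prepend i)).rnDeriv μ =ᵐ[μ]
      fun x => ENNReal.ofReal (‖f i x‖ ^ 2))
    (hne : ∀ i, ∀ᵐ x ∂μ, x 0 = i → f i x ≠ 0) :
    ∃ S : Fin N → (Lp ℂ 2 μ →L[ℂ] Lp ℂ 2 μ),
      (∀ i (g : Lp ℂ 2 μ), ⇑(S i g) =ᵐ[μ] fun x => f i x * g (shift x)) ∧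
      (∀ i (g : Lp ℂ 2 μ), ‖S i g‖ = ‖g‖) ∧
      (∀ i j, (ContinuousLinearMap.adjoint (S i)).comp (S j)
          = if i = j then 1 else 0) ∧
      (∑ i, (S i).comp (ContinuousLinearMap.adjoint (S i)) = 1) :=
  monicSystem_cuntz_relations_general μ f hf2 hac hrn hne
end
end

section
/- Let T and T' be two N×N stochastic matrices with strictly positive entries, and suppose T ≠ T'. If X is an N×N complex matrix that is diagonal and satisfies Σ_j √(T'_{i,j}) · X_{j,j} · √(T_{i,j}) = X_{i,i} for all i ∈ Z_N, then X = 0. -/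
/-!
Put `c i j = √(T' i j) √(T i j)`. Since `(a + b)/2 - √a √b = (√a - √b)²/2`, every row sum of `c`
is at most `1`, with equality exactly on the rows where `T` and `T'` agree. Taking norms in the
intertwining relation, `f j = ‖X j j‖` satisfies `f i ≤ ∑ j, c i j f j`. At a maximum of `f` this
chain of inequalities is tight, which by positivity of `c` forces `f` to be constant; evaluated on a
row where `T ≠ T'` the constant must then vanish.
-/

open Finset

lemma Real.add_div_two_sub_sqrt_mul_sqrt {a b : ℝ} (ha : 0 ≤ a) (hb : 0 ≤ b) :
    (a + b) / 2 - √a * √b = (√a - √b) ^ 2 / 2 := by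
  rw [sub_sq, Real.sq_sqrt ha, Real.sq_sqrt hb]
  ring

section Bhattacharyya

variable {ι : Type*} [Fintype ι] {p q : ι → ℝ}

lemma one_sub_sum_sqrt_mul_sqrt (hp : ∀ j, 0 ≤ p j) (hq : ∀ j, 0 ≤ q j)
    (hp1 : ∑ j, p j = 1) (hq1 : ∑ j, q j = 1) :
    1 - ∑ j, √(p j) * √(q j) = ∑ j, (√(p j) - √(q j)) ^ 2 / 2 := by
  have hsum : ∑ j, (p j + q j) / 2 = 1 := by
    rw [← sum_div, sum_add_distrib, hp1, hq1]
    norm_num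
  rw [← hsum, ← sum_sub_distrib]
  exact sum_congr rfl fun j _ => Real.add_div_two_sub_sqrt_mul_sqrt (hp j) (hq j)

lemma sum_sqrt_mul_sqrt_le_one (hp : ∀ j, 0 ≤ p j) (hq : ∀ j, 0 ≤ q j)
    (hp1 : ∑ j, p j = 1) (hq1 : ∑ j, q j = 1) :
    ∑ j, √(p j) * √(q j) ≤ 1 := by
  have := one_sub_sum_sqrt_mul_sqrt hp hq hp1 hq1
  have : 0 ≤ ∑ j, (√(p j) - √(q j)) ^ 2 / 2 := by positivity
  linarith

lemma sum_sqrt_mul_sqrt_lt_one (hp : ∀ j, 0 ≤ p j) (hq : ∀ j, 0 ≤ q j)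
    (hp1 : ∑ j, p j = 1) (hq1 : ∑ j, q j = 1) (hpq : p ≠ q) :
    ∑ j, √(p j) * √(q j) < 1 := by
  obtain ⟨k, hk⟩ := Function.ne_iff.1 hpq
  have hsqrt : √(p k) ≠ √(q k) := fun h => hk ((Real.sqrt_inj (hp k) (hq k)).1 h)
  have hpos : 0 < ∑ j, (√(p j) - √(q j)) ^ 2 / 2 :=
    sum_pos' (fun j _ => by positivity)
      ⟨k, mem_univ k, by have := sub_ne_zero.2 hsqrt; positivity⟩
  have := one_sub_sum_sqrt_mul_sqrt hp hq hp1 hq1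
  linarith

end Bhattacharyya

section MaximumPrinciple

variable {ι : Type*} [Fintype ι]

lemma forall_eq_of_le_sum_mul {c f : ι → ℝ} {M : ℝ} (hc : ∀ j, 0 < c j) (hc1 : ∑ j, c j ≤ 1)
    (hM : 0 ≤ M) (hfM : ∀ j, f j ≤ M) (h : M ≤ ∑ j, c j * f j) (j : ι) :
    f j = M := by
  by_contra hj
  have hlt : ∑ k, c k * f k < ∑ k, c k * M :=
    sum_lt_sum (fun k _ => mul_le_mul_of_nonneg_left (hfM k) (hc k).le)
      ⟨j, mem_univ j, mul_lt_mul_of_pos_left (lt_of_le_of_ne (hfM j) hj) (hc j)⟩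
  have hle : ∑ k, c k * M ≤ M := by
    rw [← sum_mul]
    exact mul_le_of_le_one_left hM hc1
  linarith

lemma eq_zero_of_le_sum_mul_of_sum_lt_one {c : Matrix ι ι ℝ} {f : ι → ℝ}
    (hc : ∀ i j, 0 < c i j) (hc1 : ∀ i, ∑ j, c i j ≤ 1) {i₁ : ι} (hlt : ∑ j, c i₁ j < 1)
    (hf0 : ∀ i, 0 ≤ f i) (hf : ∀ i, f i ≤ ∑ j, c i j * f j) :
    f = 0 := by
  have : Nonempty ι := ⟨i₁⟩
  obtain ⟨i₀, hi₀⟩ := Finite.exists_max f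
  have hconst : ∀ j, f j = f i₀ := forall_eq_of_le_sum_mul (hc i₀) (hc1 i₀) (hf0 i₀) hi₀ (hf i₀)
  have hM : f i₀ ≤ (∑ j, c i₁ j) * f i₀ := by
    calc f i₀ = f i₁ := (hconst i₁).symm
      _ ≤ ∑ j, c i₁ j * f j := hf i₁
      _ = (∑ j, c i₁ j) * f i₀ := by simp only [hconst, sum_mul]
  have hM0 : f i₀ = 0 := by nlinarith [hf0 i₀]
  funext j
  rw [hconst j, hM0, Pi.zero_apply]

end MaximumPrinciple

lemma norm_le_sum_sqrt_mul_sqrt_mul_norm {ι : Type*} [Fintype ι] (a b : ι → ℝ) (x : ι → ℂ) :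
    ‖∑ j, (√(a j) : ℂ) * x j * (√(b j) : ℂ)‖ ≤ ∑ j, √(a j) * √(b j) * ‖x j‖ := by
  refine (norm_sum_le _ _).trans (le_of_eq (sum_congr rfl fun j _ => ?_))
  rw [norm_mul, norm_mul, Complex.norm_real, Complex.norm_real, Real.norm_of_nonneg
    (Real.sqrt_nonneg _), Real.norm_of_nonneg (Real.sqrt_nonneg _)]
  ring

theorem diagonal_intertwiner_zero_of_ne {N : ℕ}
    (T T' : Matrix (Fin N) (Fin N) ℝ)
    (hT : ∀ i j, 0 < T i j) (hT' : ∀ i j, 0 < T' i j)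
    (hrow : ∀ i, ∑ j, T i j = 1) (hrow' : ∀ i, ∑ j, T' i j = 1)
    (hne : T ≠ T')
    (X : Matrix (Fin N) (Fin N) ℂ) (hdiag : X.IsDiag)
    (hX : ∀ i, ∑ j, (Real.sqrt (T' i j) : ℂ) * X j j * (Real.sqrt (T i j) : ℂ)
      = X i i) :
    X = 0 := by
  obtain ⟨i₁, hi₁⟩ := Function.ne_iff.1 hne
  have hlt : ∑ j, √(T' i₁ j) * √(T i₁ j) < 1 :=
    sum_sqrt_mul_sqrt_lt_one (fun j => (hT' i₁ j).le) (fun j => (hT i₁ j).le)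
      (hrow' i₁) (hrow i₁) (Ne.symm hi₁)
  have hnorm : (fun i => ‖X i i‖) = 0 :=
    eq_zero_of_le_sum_mul_of_sum_lt_one
      (fun i j => mul_pos (Real.sqrt_pos.2 (hT' i j)) (Real.sqrt_pos.2 (hT i j)))
      (fun i => sum_sqrt_mul_sqrt_le_one (fun j => (hT' i j).le) (fun j => (hT i j).le)
        (hrow' i) (hrow i))
      hlt (fun i => norm_nonneg _)
      (fun i => (hX i) ▸ norm_le_sum_sqrt_mul_sqrt_mul_norm (T' i) (T i) fun j => X j j)
  ext i j
  rcases eq_or_ne i j with rfl | hij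
  · simpa using congr_fun hnorm i
  · exact hdiag hij
end

section
/- Two distinct Markov measures on (Z_N)^ℕ with strictly positive stochastic transition matrices T ≠ T' (with respective positive stationary vectors λ, λ') are mutually singular. -/
open MeasureTheory ENNReal

noncomputable section

/-- The Markov weight of a chain starting at `i`. -/
def chainProd {N : ℕ} (T : Fin N → Fin N → ℝ) : Fin N → List (Fin N) → ℝ
  | _, [] => 1
  | i, j :: rest => T i j * chainProd T j rest

/-- The Markov measure of the cylinder determined by a finite word:
`μ(C(i₁…iₙ)) = λ_{i₁} T_{i₁,i₂}⋯T_{i_{n-1},i_n}`. -/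
def markovCyl {N : ℕ} (lam : Fin N → ℝ) (T : Fin N → Fin N → ℝ) : List (Fin N) → ℝ
  | [] => 1
  | i :: rest => lam i * chainProd T i rest

/-! Let `H` be the entrywise geometric mean `Hᵢⱼ = √(Tᵢⱼ T'ᵢⱼ)` and `ℓᵢ = √(λᵢ λ'ᵢ)`. The
Hellinger affinity `∑ √(μ (C w) μ' (C w))` over the words `w` of length `n + 1` equals
`ℓ ⬝ᵥ Hⁿ 1`. By AM–GM, `H` is substochastic, and strictly so in a row where `T` and `T'` differ;
as `H` is positive, every row of `H²` then has mass at most some `c < 1`, so the affinity decays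
geometrically. Taking for `Aₙ` the union of the cylinders of length `n + 1` on which `μ ≤ μ'`,
both `μ Aₙ` and `μ' Aₙᶜ` are bounded by the affinity, and by Borel–Cantelli `limsup Aₙ` is a
`μ`-null set with `μ'`-null complement. -/

theorem MeasureTheory.Measure.MutuallySingular.of_tsum_ne_top {X : Type*} [MeasurableSpace X]
    {μ ν : Measure X} {A : ℕ → Set X} (hA : ∀ n, MeasurableSet (A n))
    (hμ : ∑' n, μ (A n) ≠ ∞) (hν : ∑' n, ν (A n)ᶜ ≠ ∞) : μ ⟂ₘ ν := by
  refine ⟨Filter.limsup A .atTop, MeasurableSet.measurableSet_limsup hA,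
    measure_limsup_atTop_eq_zero hμ, measure_mono_null ?_ (measure_limsup_atTop_eq_zero hν)⟩
  rw [Filter.limsup_compl]
  exact Filter.liminf_le_limsup

theorem exists_measurableSet_measure_le_sum_min {X ι : Type*} [MeasurableSpace X] [Fintype ι]
    [MeasurableSpace ι] [MeasurableSingletonClass ι] (μ ν : Measure X) {f : X → ι}
    (hf : Measurable f) :
    ∃ A, MeasurableSet A ∧ μ A ≤ ∑ i, min (μ (f ⁻¹' {i})) (ν (f ⁻¹' {i})) ∧
      ν Aᶜ ≤ ∑ i, min (μ (f ⁻¹' {i})) (ν (f ⁻¹' {i})) := by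
  classical
  set W := Finset.univ.filter fun i => μ (f ⁻¹' {i}) ≤ ν (f ⁻¹' {i})
  have hfib : ∀ s : Finset ι, ∀ i ∈ s, MeasurableSet (f ⁻¹' {i}) :=
    fun _ i _ => hf (measurableSet_singleton i)
  refine ⟨f ⁻¹' W, hf W.finite_toSet.measurableSet, ?_, ?_⟩
  · rw [← sum_measure_preimage_singleton W (hfib W)]
    calc ∑ i ∈ W, μ (f ⁻¹' {i}) = ∑ i ∈ W, min (μ (f ⁻¹' {i})) (ν (f ⁻¹' {i})) :=
          Finset.sum_congr rfl fun i hi => (min_eq_left (Finset.mem_filter.1 hi).2).symm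
      _ ≤ _ := Finset.sum_le_sum_of_subset W.subset_univ
  · rw [← Set.preimage_compl, ← Finset.coe_compl,
      ← sum_measure_preimage_singleton Wᶜ (hfib Wᶜ)]
    calc ∑ i ∈ Wᶜ, ν (f ⁻¹' {i}) = ∑ i ∈ Wᶜ, min (μ (f ⁻¹' {i})) (ν (f ⁻¹' {i})) := by
          refine Finset.sum_congr rfl fun i hi => (min_eq_right ?_).symm
          exact (by simpa [W] using hi : ν (f ⁻¹' {i}) < μ (f ⁻¹' {i})).le
      _ ≤ _ := Finset.sum_le_sum_of_subset Wᶜ.subset_univ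

theorem MeasureTheory.Measure.MutuallySingular.of_le_geometric {X : Type*} [MeasurableSpace X]
    {μ ν : Measure X} {A : ℕ → Set X} (hA : ∀ n, MeasurableSet (A n)) {C c : ℝ}
    (hC : 0 ≤ C) (hc0 : 0 ≤ c) (hc1 : c < 1) (hμ : ∀ n, μ (A n) ≤ .ofReal (C * c ^ n))
    (hν : ∀ n, ν (A n)ᶜ ≤ .ofReal (C * c ^ n)) : μ ⟂ₘ ν := by
  have hsum : ∑' n, ENNReal.ofReal (C * c ^ n) ≠ ∞ := by
    rw [← ENNReal.ofReal_tsum_of_nonneg (fun n => by positivity)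
      ((summable_geometric_of_lt_one hc0 hc1).mul_left C)]
    exact ENNReal.ofReal_ne_top
  exact .of_tsum_ne_top hA (ne_top_of_le_ne_top hsum (ENNReal.tsum_le_tsum hμ))
    (ne_top_of_le_ne_top hsum (ENNReal.tsum_le_tsum hν))

theorem Real.sqrt_mul_le_add_div_two {a b : ℝ} (ha : 0 ≤ a) (hb : 0 ≤ b) :
    √(a * b) ≤ (a + b) / 2 :=
  Real.sqrt_le_iff.2 ⟨by positivity, by nlinarith [sq_nonneg (a - b)]⟩

theorem Real.sqrt_mul_lt_add_div_two {a b : ℝ} (ha : 0 ≤ a) (hb : 0 ≤ b) (hab : a ≠ b) :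
    √(a * b) < (a + b) / 2 := by
  have hpos : 0 < (a + b) / 2 := by
    by_contra! h
    exact hab (by linarith)
  exact (Real.sqrt_lt' hpos).2 (by nlinarith [sq_pos_of_ne_zero (sub_ne_zero.2 hab)])

theorem Real.min_le_sqrt_mul {a b : ℝ} (ha : 0 ≤ a) (hb : 0 ≤ b) : min a b ≤ √(a * b) :=
  Real.le_sqrt_of_sq_le <| sq (min a b) ▸
    mul_le_mul (min_le_left a b) (min_le_right a b) (le_min ha hb) ha

namespace Matrix

variable {n : Type*} [Fintype n]

theorem mulVec_one_apply (A : Matrix n n ℝ) (i : n) : (A *ᵥ 1) i = ∑ j, A i j := by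
  simp [mulVec, dotProduct]

variable [DecidableEq n]

theorem pow_mulVec_one_le {A : Matrix n n ℝ} (hA : ∀ i j, 0 ≤ A i j) {c : ℝ}
    (hc : ∀ i, (A *ᵥ 1) i ≤ c) (k : ℕ) (i : n) : (A ^ k *ᵥ 1) i ≤ c ^ k := by
  induction k generalizing i with
  | zero => simp
  | succ k ih =>
    have hc0 : 0 ≤ c := (Finset.sum_nonneg fun j _ => hA i j).trans (mulVec_one_apply A i ▸ hc i)
    calc (A ^ (k + 1) *ᵥ 1) i = ∑ j, A i j * (A ^ k *ᵥ 1) j := by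
          rw [pow_succ', ← mulVec_mulVec]; rfl
      _ ≤ ∑ j, A i j * c ^ k := by gcongr with j; exacts [hA i j, ih j]
      _ = (A *ᵥ 1) i * c ^ k := by rw [mulVec_one_apply, Finset.sum_mul]
      _ ≤ c ^ (k + 1) := by rw [pow_succ']; gcongr; exact hc i

theorem sq_mulVec_one_lt_one {A : Matrix n n ℝ} (hA : ∀ i j, 0 ≤ A i j)
    (hrow : ∀ i, (A *ᵥ 1) i ≤ 1) {i₀ : n} (hi₀ : (A *ᵥ 1) i₀ < 1) (hcol : ∀ i, 0 < A i i₀)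
    (i : n) : (A ^ 2 *ᵥ 1) i < 1 :=
  calc (A ^ 2 *ᵥ 1) i = ∑ j, A i j * (A *ᵥ 1) j := by rw [sq, ← mulVec_mulVec]; rfl
    _ < ∑ j, A i j * 1 := by
        refine Finset.sum_lt_sum (fun j _ => ?_) ⟨i₀, Finset.mem_univ _, ?_⟩
        · exact mul_le_mul_of_nonneg_left (hrow j) (hA i j)
        · exact mul_lt_mul_of_pos_left hi₀ (hcol i)
    _ ≤ 1 := by simpa [mulVec_one_apply] using hrow i

theorem exists_pow_mulVec_one_le_geometric {A : Matrix n n ℝ} (hA : ∀ i j, 0 ≤ A i j)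
    (hrow : ∀ i, (A *ᵥ 1) i ≤ 1) {i₀ : n} (hi₀ : (A *ᵥ 1) i₀ < 1) (hcol : ∀ i, 0 < A i i₀) :
    ∃ c, 0 ≤ c ∧ c < 1 ∧ ∀ k i, (A ^ (2 * k) *ᵥ 1) i ≤ c ^ k := by
  have : Nonempty n := ⟨i₀⟩
  have hA2 : ∀ i j, 0 ≤ (A ^ 2) i j := fun i j => by
    rw [sq, mul_apply]; exact Finset.sum_nonneg fun k _ => mul_nonneg (hA i k) (hA k j)
  obtain ⟨i₁, hi₁⟩ := Finite.exists_max fun i => (A ^ 2 *ᵥ 1) i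
  refine ⟨(A ^ 2 *ᵥ 1) i₁, ?_, sq_mulVec_one_lt_one hA hrow hi₀ hcol i₁, fun k i => ?_⟩
  · rw [mulVec_one_apply]; exact Finset.sum_nonneg fun j _ => hA2 i₁ j
  · rw [pow_mul]; exact pow_mulVec_one_le hA2 hi₁ k i

end Matrix

open Matrix

def hellingerMatrix {n : Type*} (T T' : n → n → ℝ) : Matrix n n ℝ :=
  Matrix.of fun i j => √(T i j * T' i j)

section Hellinger

variable {N : ℕ} {T T' : Fin N → Fin N → ℝ}

theorem hellingerMatrix_mulVec_one_le (hT : ∀ i j, 0 ≤ T i j) (hT' : ∀ i j, 0 ≤ T' i j)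
    {i : Fin N} (hrow : ∑ j, T i j = 1) (hrow' : ∑ j, T' i j = 1) :
    (hellingerMatrix T T' *ᵥ 1) i ≤ 1 :=
  calc (hellingerMatrix T T' *ᵥ 1) i ≤ ∑ j, (T i j + T' i j) / 2 := by
        rw [mulVec_one_apply]
        exact Finset.sum_le_sum fun j _ => Real.sqrt_mul_le_add_div_two (hT i j) (hT' i j)
    _ = 1 := by rw [← Finset.sum_div, Finset.sum_add_distrib, hrow, hrow']; norm_num

theorem hellingerMatrix_mulVec_one_lt (hT : ∀ i j, 0 ≤ T i j) (hT' : ∀ i j, 0 ≤ T' i j)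
    {i j₀ : Fin N} (hrow : ∑ j, T i j = 1) (hrow' : ∑ j, T' i j = 1) (hne : T i j₀ ≠ T' i j₀) :
    (hellingerMatrix T T' *ᵥ 1) i < 1 :=
  calc (hellingerMatrix T T' *ᵥ 1) i < ∑ j, (T i j + T' i j) / 2 := by
        rw [mulVec_one_apply]
        exact Finset.sum_lt_sum
          (fun j _ => Real.sqrt_mul_le_add_div_two (hT i j) (hT' i j))
          ⟨j₀, Finset.mem_univ _, Real.sqrt_mul_lt_add_div_two (hT i j₀) (hT' i j₀) hne⟩
    _ = 1 := by rw [← Finset.sum_div, Finset.sum_add_distrib, hrow, hrow']; norm_num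

theorem chainProd_nonneg (hT : ∀ i j, 0 ≤ T i j) (i : Fin N) (w : List (Fin N)) :
    0 ≤ chainProd T i w := by
  induction w generalizing i with
  | nil => exact zero_le_one
  | cons j w ih => exact mul_nonneg (hT i j) (ih j)

theorem markovCyl_nonneg {lam : Fin N → ℝ} (hlam : ∀ i, 0 ≤ lam i) (hT : ∀ i j, 0 ≤ T i j)
    (w : List (Fin N)) : 0 ≤ markovCyl lam T w := by
  cases w with
  | nil => exact zero_le_one
  | cons i w => exact mul_nonneg (hlam i) (chainProd_nonneg hT i w)

theorem sqrt_chainProd_mul (hT : ∀ i j, 0 ≤ T i j) (hT' : ∀ i j, 0 ≤ T' i j) (i : Fin N)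
    (w : List (Fin N)) :
    √(chainProd T i w * chainProd T' i w) = chainProd (hellingerMatrix T T') i w := by
  induction w generalizing i with
  | nil => simp [chainProd]
  | cons j w ih =>
    simp only [chainProd]
    rw [mul_mul_mul_comm, Real.sqrt_mul (mul_nonneg (hT i j) (hT' i j)), ih]
    rfl

theorem sqrt_markovCyl_mul {lam lam' : Fin N → ℝ} (hlam : ∀ i, 0 ≤ lam i)
    (hlam' : ∀ i, 0 ≤ lam' i) (hT : ∀ i j, 0 ≤ T i j) (hT' : ∀ i j, 0 ≤ T' i j) (w : List (Fin N)) :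
    √(markovCyl lam T w * markovCyl lam' T' w) =
      markovCyl (fun i => √(lam i * lam' i)) (hellingerMatrix T T') w := by
  cases w with
  | nil => simp [markovCyl]
  | cons i w =>
    simp only [markovCyl]
    rw [mul_mul_mul_comm, Real.sqrt_mul (mul_nonneg (hlam i) (hlam' i)),
      sqrt_chainProd_mul hT hT']

end Hellinger

section Words

variable {N : ℕ}

theorem sum_ofFn_succ {M : Type*} [AddCommMonoid M] {n : ℕ} (g : List (Fin N) → M) :
    ∑ v : Fin (n + 1) → Fin N, g (List.ofFn v) =
      ∑ i, ∑ v : Fin n → Fin N, g (i :: List.ofFn v) := by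
  rw [← (Fin.consEquiv fun _ => Fin N).sum_comp, Fintype.sum_prod_type]
  simp

theorem sum_chainProd_ofFn (A : Matrix (Fin N) (Fin N) ℝ) (n : ℕ) (i : Fin N) :
    ∑ v : Fin n → Fin N, chainProd A i (List.ofFn v) = (A ^ n *ᵥ 1) i := by
  induction n generalizing i with
  | zero => simp [chainProd]
  | succ n ih =>
    rw [sum_ofFn_succ, pow_succ', ← mulVec_mulVec]
    simp only [chainProd, ← Finset.mul_sum, ih]
    rfl

theorem sum_markovCyl_ofFn (lam : Fin N → ℝ) (A : Matrix (Fin N) (Fin N) ℝ) (n : ℕ) :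
    ∑ v : Fin (n + 1) → Fin N, markovCyl lam A (List.ofFn v) = lam ⬝ᵥ (A ^ n *ᵥ 1) := by
  rw [sum_ofFn_succ]
  simp only [markovCyl, ← Finset.mul_sum, sum_chainProd_ofFn]
  rfl

def wordPrefix (n : ℕ) (ω : Word N) : Fin n → Fin N := fun k => ω k

theorem measurable_wordPrefix (n : ℕ) : Measurable (wordPrefix (N := N) n) :=
  measurable_pi_lambda _ fun _ => measurable_pi_apply _

theorem wordPrefix_preimage_singleton {n : ℕ} (v : Fin n → Fin N) :
    wordPrefix n ⁻¹' {v} = cyl (List.ofFn v) := by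
  ext ω
  simp only [Set.mem_preimage, Set.mem_singleton_iff, funext_iff, wordPrefix, cyl,
    Set.mem_ofPred_eq, List.get_ofFn]
  exact ⟨fun h k => h (Fin.cast (by simp) k), fun h k => h (Fin.cast (by simp) k)⟩

end Words

theorem exists_measurableSet_le_hellinger {N : ℕ} {lam lam' : Fin N → ℝ}
    {T T' : Fin N → Fin N → ℝ} (hlam : ∀ i, 0 ≤ lam i) (hlam' : ∀ i, 0 ≤ lam' i)
    (hT : ∀ i j, 0 ≤ T i j) (hT' : ∀ i j, 0 ≤ T' i j) {μ μ' : Measure (Word N)}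
    (hμ : ∀ w, μ (cyl w) = ENNReal.ofReal (markovCyl lam T w))
    (hμ' : ∀ w, μ' (cyl w) = ENNReal.ofReal (markovCyl lam' T' w)) (n : ℕ) :
    ∃ A, MeasurableSet A ∧
      μ A ≤ .ofReal ((fun i => √(lam i * lam' i)) ⬝ᵥ (hellingerMatrix T T' ^ n *ᵥ 1)) ∧
      μ' Aᶜ ≤ .ofReal ((fun i => √(lam i * lam' i)) ⬝ᵥ (hellingerMatrix T T' ^ n *ᵥ 1)) := by
  obtain ⟨A, hA, hμA, hμ'A⟩ :=
    exists_measurableSet_measure_le_sum_min μ μ' (measurable_wordPrefix (N := N) (n + 1))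
  have hmin : ∑ v, min (μ (wordPrefix (n + 1) ⁻¹' {v})) (μ' (wordPrefix (n + 1) ⁻¹' {v})) ≤
      .ofReal ((fun i => √(lam i * lam' i)) ⬝ᵥ (hellingerMatrix T T' ^ n *ᵥ 1)) := by
    simp only [wordPrefix_preimage_singleton, hμ, hμ', ← ENNReal.ofReal_min]
    rw [← ENNReal.ofReal_sum_of_nonneg fun v _ => le_min (markovCyl_nonneg hlam hT _)
      (markovCyl_nonneg hlam' hT' _), ← sum_markovCyl_ofFn]
    refine ENNReal.ofReal_le_ofReal (Finset.sum_le_sum fun v _ => ?_)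
    rw [← sqrt_markovCyl_mul hlam hlam' hT hT']
    exact Real.min_le_sqrt_mul (markovCyl_nonneg hlam hT _) (markovCyl_nonneg hlam' hT' _)
  exact ⟨A, hA, hμA.trans hmin, hμ'A.trans hmin⟩

theorem markov_measures_mutuallySingular_general {N : ℕ}
    (lam lam' : Fin N → ℝ) (T T' : Fin N → Fin N → ℝ)
    (hlam_pos : ∀ i, 0 < lam i) (hlam_pos' : ∀ i, 0 < lam' i)
    (hT_pos : ∀ i j, 0 < T i j) (hT_pos' : ∀ i j, 0 < T' i j)
    (hrow : ∀ i, ∑ j, T i j = 1) (hrow' : ∀ i, ∑ j, T' i j = 1)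
    (hne : T ≠ T')
    (μ μ' : Measure (Word N))
    (hμ : ∀ w : List (Fin N), μ (cyl w) = ENNReal.ofReal (markovCyl lam T w))
    (hμ' : ∀ w : List (Fin N), μ' (cyl w) = ENNReal.ofReal (markovCyl lam' T' w)) :
    μ ⟂ₘ μ' := by
  have hT := fun i j => (hT_pos i j).le
  have hT' := fun i j => (hT_pos' i j).le
  obtain ⟨i₀, j₀, hij⟩ : ∃ i j, T i j ≠ T' i j := by
    contrapose! hne
    exact funext fun i => funext (hne i)
  obtain ⟨c, hc0, hc1, hdecay⟩ := exists_pow_mulVec_one_le_geometric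
    (A := hellingerMatrix T T') (fun i j => Real.sqrt_nonneg _)
    (fun i => hellingerMatrix_mulVec_one_le hT hT' (hrow i) (hrow' i))
    (hellingerMatrix_mulVec_one_lt hT hT' (hrow i₀) (hrow' i₀) hij)
    (fun i => Real.sqrt_pos.2 (mul_pos (hT_pos i i₀) (hT_pos' i i₀)))
  set ℓ : Fin N → ℝ := fun i => √(lam i * lam' i)
  have hbound : ∀ k, ℓ ⬝ᵥ (hellingerMatrix T T' ^ (2 * k) *ᵥ 1) ≤ (∑ i, ℓ i) * c ^ k :=
    fun k => by
      rw [Finset.sum_mul]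
      exact Finset.sum_le_sum fun i _ => mul_le_mul_of_nonneg_left (hdecay k i) (Real.sqrt_nonneg _)
  choose A hA hμA hμ'A using exists_measurableSet_le_hellinger (fun i => (hlam_pos i).le)
    (fun i => (hlam_pos' i).le) hT hT' hμ hμ'
  exact .of_le_geometric (fun k => hA (2 * k)) (by positivity) hc0 hc1
    (fun k => (hμA (2 * k)).trans (ENNReal.ofReal_le_ofReal (hbound k)))
    (fun k => (hμ'A (2 * k)).trans (ENNReal.ofReal_le_ofReal (hbound k)))

theorem markov_measures_mutuallySingular {N : ℕ} (hN : 2 ≤ N)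
    (lam lam' : Fin N → ℝ) (T T' : Fin N → Fin N → ℝ)
    (hlam_pos : ∀ i, 0 < lam i) (hlam_pos' : ∀ i, 0 < lam' i)
    (hT_pos : ∀ i j, 0 < T i j) (hT_pos' : ∀ i j, 0 < T' i j)
    (hrow : ∀ i, ∑ j, T i j = 1) (hrow' : ∀ i, ∑ j, T' i j = 1)
    (hstat : ∀ j, ∑ i, lam i * T i j = lam j)
    (hstat' : ∀ j, ∑ i, lam' i * T' i j = lam' j)
    (hne : T ≠ T')
    (μ μ' : Measure (Word N)) [IsProbabilityMeasure μ] [IsProbabilityMeasure μ']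
    (hμ : ∀ w : List (Fin N), μ (cyl w) = ENNReal.ofReal (markovCyl lam T w))
    (hμ' : ∀ w : List (Fin N), μ' (cyl w) = ENNReal.ofReal (markovCyl lam' T' w)) :
    μ ⟂ₘ μ' :=
  markov_measures_mutuallySingular_general lam lam' T T' hlam_pos hlam_pos' hT_pos hT_pos' hrow
    hrow' hne μ μ' hμ hμ'
end
end

section
/- The one-sided shift σ on (Z_N)^ℕ is ergodic with respect to any Markov measure μ determined by a strictly positive stochastic matrix T and strictly positive stationary vector λ. -/
open MeasureTheory ENNReal

noncomputable section

/-!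
Since `T` is strictly positive there is `c > 0` with `c λⱼ ≤ Tᵢⱼ`, so concatenating cylinders
gives `μ(C(v) ∩ σ^{-|v|} C(u)) = μ(C(vu)) ≥ c μ(C(v)) μ(C(u))`, and by additivity
`μ(σ^{-n} U ∩ V) ≥ c μ(U) μ(V)` for finite unions `U`, `V` of cylinders and suitable `n`.
If `A` is invariant, `σ^{-n} U ∩ V ⊆ σ^{-n}(U \ A) ∪ (V ∩ A)`, whose measure is at most
`μ(A ∆ U) + μ(Aᶜ ∆ V)` because `σ` preserves `μ`. Both sides of the resulting inequality are
continuous for the pseudometric `μ(s ∆ t)`, and finite unions of cylinders are dense for it, so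
letting `U → A` and `V → Aᶜ` gives `c μ(A) μ(Aᶜ) ≤ 0`.
-/

open Filter Set
open scoped symmDiff Topology

theorem exists_pos_forall_mul_le {ι κ : Type*} [Finite ι] [Finite κ] (a : κ → ℝ)
    {b : ι → κ → ℝ} (hb : ∀ i j, 0 < b i j) : ∃ c > 0, ∀ i j, c * a j ≤ b i j := by
  have hsmall : ∀ᶠ c in 𝓝[>] (0 : ℝ), ∀ i j, c * a j < b i j := by
    simp only [eventually_all]
    intro i j
    have : Tendsto (fun c : ℝ => c * a j) (𝓝[>] 0) (𝓝 0) :=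
      ((continuous_mul_const (a j)).tendsto' 0 0 (zero_mul _)).mono_left nhdsWithin_le_nhds
    exact this.eventually (gt_mem_nhds (hb i j))
  obtain ⟨c, hcb, hc⟩ := (hsmall.and self_mem_nhdsWithin).exists
  exact ⟨c, hc, fun i j => (hcb i j).le⟩

section Criterion

variable {α : Type*} [MeasurableSpace α] {μ : Measure α}

variable [IsFiniteMeasure μ]

theorem MeasureTheory.Measure.MeasureDense.dense_measuredSets {𝒜 : Set (Set α)}
    (h𝒜 : μ.MeasureDense 𝒜) : Dense {s : MeasuredSets μ | (s : Set α) ∈ 𝒜} := by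
  refine Metric.dense_iff.2 fun s r hr => ?_
  obtain ⟨t, ht, hst⟩ := h𝒜.approx s s.2 (measure_ne_top μ _) r hr
  exact ⟨⟨t, h𝒜.measurable t ht⟩,
    ENNReal.toReal_lt_of_lt_ofReal (by rwa [symmDiff_comm]), ht⟩

theorem MeasureTheory.MeasurePreserving.measureReal_preimage_inter_le {f : α → α}
    (hf : MeasurePreserving f μ μ) {A U : Set α} (hA : MeasurableSet A) (hfA : f ⁻¹' A = A)
    (hU : MeasurableSet U) (V : Set α) :
    μ.real (f ⁻¹' U ∩ V) ≤ μ.real (A ∆ U) + μ.real (Aᶜ ∆ V) :=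
  calc μ.real (f ⁻¹' U ∩ V) ≤ μ.real (f ⁻¹' (U \ A) ∪ V ∩ A) := by
        refine measureReal_mono fun x ⟨hxU, hxV⟩ => ?_
        by_cases hx : x ∈ A
        · exact .inr ⟨hxV, hx⟩
        · exact .inl ⟨hxU, fun h => hx (hfA ▸ h)⟩
    _ ≤ μ.real (f ⁻¹' (U \ A)) + μ.real (V ∩ A) := measureReal_union_le _ _
    _ = μ.real (U \ A) + μ.real (V ∩ A) := by
        rw [hf.measureReal_preimage (hU.diff hA).nullMeasurableSet]
    _ ≤ μ.real (A ∆ U) + μ.real (Aᶜ ∆ V) := by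
        refine add_le_add (measureReal_mono subset_union_right) (measureReal_mono ?_)
        rw [← sdiff_compl]
        exact subset_union_right

theorem preErgodic_of_forall_mul_le_measureReal_preimage_inter {f : α → α}
    (hf : MeasurePreserving f μ μ) {𝒜 : Set (Set α)} (h𝒜 : μ.MeasureDense 𝒜) {c : ℝ}
    (hc : 0 < c)
    (hmix : ∀ U ∈ 𝒜, ∀ V ∈ 𝒜, ∃ n, c * μ.real U * μ.real V ≤ μ.real (f^[n] ⁻¹' U ∩ V)) :
    PreErgodic f μ := by
  refine ⟨fun A hA hfA => ?_⟩
  let a : MeasuredSets μ := ⟨A, hA⟩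
  let b : MeasuredSets μ := ⟨Aᶜ, hA.compl⟩
  have hμ : Continuous fun s : MeasuredSets μ => μ.real s :=
    MeasuredSets.lipschitzWith_measureReal.continuous
  have hclosed : IsClosed {p : MeasuredSets μ × MeasuredSets μ |
      c * μ.real p.1 * μ.real p.2 ≤ dist a p.1 + dist b p.2} :=
    isClosed_le ((continuous_const.mul (hμ.comp continuous_fst)).mul (hμ.comp continuous_snd))
      ((continuous_const.dist continuous_fst).add (continuous_const.dist continuous_snd))
  have hab : c * μ.real A * μ.real Aᶜ ≤ 0 := by
    have hmem : (a, b) ∈ closure ({s : MeasuredSets μ | (s : Set α) ∈ 𝒜} ×ˢ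
        {s : MeasuredSets μ | (s : Set α) ∈ 𝒜}) :=
      (h𝒜.dense_measuredSets.prod h𝒜.dense_measuredSets).closure_eq ▸ mem_univ _
    refine le_of_le_of_eq (closure_minimal (fun p hp => ?_) hclosed hmem)
      (by rw [dist_self, dist_self, add_zero])
    obtain ⟨n, hn⟩ := hmix p.1 hp.1 p.2 hp.2
    exact hn.trans ((hf.iterate n).measureReal_preimage_inter_le hA
      (Function.IsFixedPt.preimage_iterate hfA n) p.1.2 p.2)
  have hzero : μ A = 0 ∨ μ Aᶜ = 0 := by
    have := le_antisymm hab (by positivity)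
    simp only [mul_eq_zero, hc.ne', false_or] at this
    exact this.imp (measureReal_eq_zero_iff).1 (measureReal_eq_zero_iff).1
  exact eventuallyConst_set'.2 (hzero.imp ae_eq_empty.2 ae_eq_univ.2)

end Criterion

namespace MarkovShift

variable {N : ℕ} {lam : Fin N → ℝ} {T : Fin N → Fin N → ℝ} {μ : Measure (Word N)}

def take (n : ℕ) (ω : Word N) : Fin n → Fin N := fun k => ω k

theorem measurable_shift : Measurable (shift : Word N → Word N) :=
  measurable_pi_lambda _ fun n => measurable_pi_apply (n + 1)

theorem measurable_take (n : ℕ) : Measurable (take n : Word N → Fin n → Fin N) :=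
  measurable_pi_lambda _ fun k => measurable_pi_apply (k : ℕ)

theorem mem_cyl_nil (ω : Word N) : ω ∈ cyl [] := fun k => k.elim0

theorem mem_cyl_cons {i : Fin N} {w : List (Fin N)} {ω : Word N} :
    ω ∈ cyl (i :: w) ↔ ω 0 = i ∧ shift ω ∈ cyl w :=
  Fin.forall_fin_succ

theorem mem_cyl_append {v w : List (Fin N)} {ω : Word N} :
    ω ∈ cyl (v ++ w) ↔ ω ∈ cyl v ∧ shift^[v.length] ω ∈ cyl w := by
  induction v generalizing ω with
  | nil => simp [mem_cyl_nil]
  | cons i v ih =>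
    simp only [List.cons_append, mem_cyl_cons, ih, List.length_cons, Function.iterate_succ_apply,
      and_assoc]

theorem cyl_append (v w : List (Fin N)) : cyl (v ++ w) = cyl v ∩ shift^[v.length] ⁻¹' cyl w :=
  Set.ext fun _ => mem_cyl_append

theorem cyl_ofFn {n : ℕ} (f : Fin n → Fin N) : cyl (List.ofFn f) = take n ⁻¹' {f} := by
  ext ω
  simp [cyl, take, funext_iff, Fin.forall_iff]

theorem measurableSet_cyl (w : List (Fin N)) : MeasurableSet (cyl w) := by
  rw [← List.ofFn_get w, cyl_ofFn]
  exact measurable_take _ (measurableSet_singleton _)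

theorem preimage_shift_cyl (w : List (Fin N)) : shift ⁻¹' cyl w = ⋃ i, cyl (i :: w) := by
  ext ω
  simp [mem_cyl_cons]

theorem pairwise_disjoint_cyl_cons (w : List (Fin N)) :
    Pairwise fun i j => Disjoint (cyl (i :: w)) (cyl (j :: w)) := fun _ _ hij =>
  Set.disjoint_left.2 fun _ hi hj => hij ((mem_cyl_cons.1 hi).1.symm.trans (mem_cyl_cons.1 hj).1)

-- The level `n + 1` is positive, so the fibres of `take (n + 1)` are cylinders of nonempty words,
-- on which stationarity and the bound `c λⱼ ≤ Tᵢⱼ` act.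
theorem exists_eq_preimage_take {s : Set (Word N)}
    (hs : s ∈ measurableCylinders fun _ : ℕ => Fin N) :
    ∃ n, ∃ S : Set (Fin (n + 1) → Fin N), s = take (n + 1) ⁻¹' S := by
  simp only [measurableCylinders_nat, mem_iUnion, mem_singleton_iff] at hs
  obtain ⟨n, S, -, rfl⟩ := hs
  exact ⟨n, (fun (g : Fin (n + 1) → Fin N) (i : Finset.Iic n) =>
    g ⟨i, Nat.lt_succ_of_le (Finset.mem_Iic.1 i.2)⟩) ⁻¹' S, rfl⟩

theorem chainProd_nonneg (hT : ∀ i j, 0 ≤ T i j) (i : Fin N) (w : List (Fin N)) :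
    0 ≤ chainProd T i w := by
  induction w generalizing i with
  | nil => exact zero_le_one
  | cons j w ih => exact mul_nonneg (hT i j) (ih j)

theorem markovCyl_nonneg (hlam : ∀ i, 0 ≤ lam i) (hT : ∀ i j, 0 ≤ T i j) (w : List (Fin N)) :
    0 ≤ markovCyl lam T w := by
  cases w with
  | nil => exact zero_le_one
  | cons i w => exact mul_nonneg (hlam i) (chainProd_nonneg hT i w)

theorem chainProd_append (i : Fin N) (v w : List (Fin N)) :
    chainProd T i (v ++ w) = chainProd T i v * chainProd T (v.getLastD i) w := by
  induction v generalizing i with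
  | nil => simp [chainProd]
  | cons j v ih => simp only [List.cons_append, chainProd, ih, List.getLastD_cons, mul_assoc]

theorem sum_markovCyl_cons (hstat : ∀ j, ∑ i, lam i * T i j = lam j) (j : Fin N)
    (w : List (Fin N)) : ∑ i, markovCyl lam T (i :: j :: w) = markovCyl lam T (j :: w) := by
  simp only [markovCyl, chainProd, ← mul_assoc, ← Finset.sum_mul, hstat]

theorem mul_markovCyl_le_markovCyl_append {c : ℝ} (hc : ∀ i j, c * lam j ≤ T i j)
    (hlam : ∀ i, 0 ≤ lam i) (hT : ∀ i j, 0 ≤ T i j) (i : Fin N) (v : List (Fin N)) (j : Fin N)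
    (u : List (Fin N)) :
    c * markovCyl lam T (i :: v) * markovCyl lam T (j :: u) ≤ markovCyl lam T (i :: v ++ j :: u) :=
  calc c * markovCyl lam T (i :: v) * markovCyl lam T (j :: u)
      = markovCyl lam T (i :: v) * (c * lam j) * chainProd T j u := by
        simp only [markovCyl]; ring
    _ ≤ markovCyl lam T (i :: v) * T (v.getLastD i) j * chainProd T j u := by
        gcongr
        · exact chainProd_nonneg hT _ _
        · exact markovCyl_nonneg hlam hT _
        · exact hc _ _
    _ = markovCyl lam T (i :: v ++ j :: u) := by
        simp only [markovCyl, List.cons_append, chainProd_append, chainProd]; ring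

theorem measure_preimage_shift_cyl_cons (hlam : ∀ i, 0 ≤ lam i) (hT : ∀ i j, 0 ≤ T i j)
    (hstat : ∀ j, ∑ i, lam i * T i j = lam j)
    (hμ : ∀ w : List (Fin N), μ (cyl w) = ENNReal.ofReal (markovCyl lam T w))
    (j : Fin N) (w : List (Fin N)) :
    μ (shift ⁻¹' cyl (j :: w)) = μ (cyl (j :: w)) := by
  rw [preimage_shift_cyl, measure_iUnion (pairwise_disjoint_cyl_cons _)
    (fun _ => measurableSet_cyl _), tsum_fintype]
  simp only [hμ]
  rw [← ENNReal.ofReal_sum_of_nonneg fun _ _ => markovCyl_nonneg hlam hT _,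
    sum_markovCyl_cons hstat]

theorem measurePreserving_shift [IsFiniteMeasure μ] (hlam : ∀ i, 0 ≤ lam i)
    (hT : ∀ i j, 0 ≤ T i j) (hstat : ∀ j, ∑ i, lam i * T i j = lam j)
    (hμ : ∀ w : List (Fin N), μ (cyl w) = ENNReal.ofReal (markovCyl lam T w)) :
    MeasurePreserving shift μ μ := by
  refine ⟨measurable_shift, ext_of_generate_finite _ generateFrom_measurableCylinders.symm
    isPiSystem_measurableCylinders (fun s hs => ?_) ?_⟩
  · obtain ⟨n, S, rfl⟩ := exists_eq_preimage_take hs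
    rw [Measure.map_apply measurable_shift ((measurable_take _) S.toFinite.measurableSet),
      ← S.toFinite.coe_toFinset, ← preimage_comp,
      ← sum_measure_preimage_singleton _ fun _ _ => (measurable_take _).comp measurable_shift
        (measurableSet_singleton _),
      ← sum_measure_preimage_singleton _ fun _ _ => measurable_take _ (measurableSet_singleton _)]
    refine Finset.sum_congr rfl fun f _ => ?_
    rw [preimage_comp, ← cyl_ofFn, List.ofFn_succ,
      measure_preimage_shift_cyl_cons hlam hT hstat hμ]
  · rw [Measure.map_apply measurable_shift MeasurableSet.univ, preimage_univ]

theorem measureReal_cyl (hlam : ∀ i, 0 ≤ lam i) (hT : ∀ i j, 0 ≤ T i j)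
    (hμ : ∀ w : List (Fin N), μ (cyl w) = ENNReal.ofReal (markovCyl lam T w))
    (w : List (Fin N)) : μ.real (cyl w) = markovCyl lam T w := by
  rw [measureReal_def, hμ, ENNReal.toReal_ofReal (markovCyl_nonneg hlam hT w)]

theorem mul_measureReal_le_measureReal_preimage_inter [IsFiniteMeasure μ] {c : ℝ}
    (hc : ∀ i j, c * lam j ≤ T i j) (hlam : ∀ i, 0 ≤ lam i) (hT : ∀ i j, 0 ≤ T i j)
    (hμ : ∀ w : List (Fin N), μ (cyl w) = ENNReal.ofReal (markovCyl lam T w)) {n m : ℕ}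
    (S : Set (Fin (n + 1) → Fin N)) (S' : Set (Fin (m + 1) → Fin N)) :
    c * μ.real (take (n + 1) ⁻¹' S) * μ.real (take (m + 1) ⁻¹' S') ≤
      μ.real (shift^[m + 1] ⁻¹' (take (n + 1) ⁻¹' S) ∩ take (m + 1) ⁻¹' S') := by
  obtain ⟨S, rfl⟩ := S.toFinite.exists_finset_coe
  obtain ⟨S', rfl⟩ := S'.toFinite.exists_finset_coe
  let p (ω : Word N) := (take (n + 1) (shift^[m + 1] ω), take (m + 1) ω)
  have hp : Measurable p :=
    ((measurable_take _).comp (measurable_shift.iterate _)).prodMk (measurable_take _)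
  have hfiber (f : Fin (n + 1) → Fin N) (g : Fin (m + 1) → Fin N) :
      p ⁻¹' {(f, g)} = cyl (List.ofFn g ++ List.ofFn f) := by
    rw [cyl_append, List.length_ofFn, cyl_ofFn, cyl_ofFn, inter_comm]
    ext ω
    simp only [p, mem_preimage, mem_singleton_iff, Prod.mk.injEq, mem_inter_iff]
  have hset :
      shift^[m + 1] ⁻¹' (take (n + 1) ⁻¹' S) ∩ take (m + 1) ⁻¹' S' = p ⁻¹' ↑(S ×ˢ S') := by
    ext ω
    simp [p]
  have htake {k : ℕ} (y : Fin k → Fin N) : MeasurableSet (take k ⁻¹' {y}) :=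
    measurable_take k (measurableSet_singleton y)
  rw [hset, ← sum_measureReal_preimage_singleton _ fun y _ => hp (measurableSet_singleton y),
    ← sum_measureReal_preimage_singleton _ fun y _ => htake y,
    ← sum_measureReal_preimage_singleton _ fun y _ => htake y,
    Finset.sum_product, mul_assoc, Finset.sum_mul_sum, Finset.mul_sum]
  refine Finset.sum_le_sum fun f _ => ?_
  rw [Finset.mul_sum]
  refine Finset.sum_le_sum fun g _ => ?_
  rw [hfiber, ← mul_assoc, mul_right_comm, ← cyl_ofFn, ← cyl_ofFn, measureReal_cyl hlam hT hμ,
    measureReal_cyl hlam hT hμ, measureReal_cyl hlam hT hμ, List.ofFn_succ (f := f),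
    List.ofFn_succ (f := g)]
  exact mul_markovCyl_le_markovCyl_append hc hlam hT _ _ _ _

theorem exists_mul_le_measureReal_preimage_inter [IsFiniteMeasure μ] {c : ℝ}
    (hc : ∀ i j, c * lam j ≤ T i j) (hlam : ∀ i, 0 ≤ lam i) (hT : ∀ i j, 0 ≤ T i j)
    (hμ : ∀ w : List (Fin N), μ (cyl w) = ENNReal.ofReal (markovCyl lam T w))
    {U V : Set (Word N)} (hU : U ∈ measurableCylinders fun _ : ℕ => Fin N)
    (hV : V ∈ measurableCylinders fun _ : ℕ => Fin N) :
    ∃ n, c * μ.real U * μ.real V ≤ μ.real (shift^[n] ⁻¹' U ∩ V) := by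
  obtain ⟨n, S, rfl⟩ := exists_eq_preimage_take hU
  obtain ⟨m, S', rfl⟩ := exists_eq_preimage_take hV
  exact ⟨m + 1, mul_measureReal_le_measureReal_preimage_inter hc hlam hT hμ S S'⟩

end MarkovShift

theorem markov_shift_ergodic_general {N : ℕ}
    (lam : Fin N → ℝ) (T : Fin N → Fin N → ℝ)
    (hlam_pos : ∀ i, 0 < lam i) (hT_pos : ∀ i j, 0 < T i j)
    (hstat : ∀ j, ∑ i, lam i * T i j = lam j)
    (μ : Measure (Word N)) [IsProbabilityMeasure μ]
    (hμ : ∀ w : List (Fin N), μ (cyl w) = ENNReal.ofReal (markovCyl lam T w)) :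
    ∀ A : Set (Word N), MeasurableSet A → shift ⁻¹' A = A →
      μ A = 0 ∨ μ A = μ Set.univ := by
  open MarkovShift in
  intro A hA hinv
  have hlam i : 0 ≤ lam i := (hlam_pos i).le
  have hT i j : 0 ≤ T i j := (hT_pos i j).le
  obtain ⟨c, hc, hcT⟩ := exists_pos_forall_mul_le lam hT_pos
  have hergodic : PreErgodic shift μ :=
    preErgodic_of_forall_mul_le_measureReal_preimage_inter
      (measurePreserving_shift hlam hT hstat hμ)
      (.of_generateFrom_isSetAlgebra_finite μ isSetAlgebra_measurableCylinders
        generateFrom_measurableCylinders.symm)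
      hc fun _ hU _ hV => exists_mul_le_measureReal_preimage_inter hcT hlam hT hμ hU hV
  refine (hergodic.measure_self_or_compl_eq_zero hA hinv).imp_right fun h => ?_
  rw [← measure_add_measure_compl hA, h, add_zero]

theorem markov_shift_ergodic {N : ℕ} (hN : 2 ≤ N)
    (lam : Fin N → ℝ) (T : Fin N → Fin N → ℝ)
    (hlam_pos : ∀ i, 0 < lam i) (hT_pos : ∀ i j, 0 < T i j)
    (hrow : ∀ i, ∑ j, T i j = 1) (hstat : ∀ j, ∑ i, lam i * T i j = lam j)
    (μ : Measure (Word N)) [IsProbabilityMeasure μ]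
    (hμ : ∀ w : List (Fin N), μ (cyl w) = ENNReal.ofReal (markovCyl lam T w)) :
    ∀ A : Set (Word N), MeasurableSet A → shift ⁻¹' A = A →
      μ A = 0 ∨ μ A = μ Set.univ :=
  markov_shift_ergodic_general lam T hlam_pos hT_pos hstat μ hμ
end
end
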